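/- Let μ be a finite Borel measure on ℝ^m and s > 0. The set E = {x : limsup_{r→0} r^{-s} μ(B_r(x)) > 0} has σ-finite s-dimensional Hausdorff measure; in particular, if for every ε > 0 one sets E_ε = {x : limsup_{r→0} r^{-s}μ(B_r(x)) ≥ ε}, then H^s(E_ε) ≤ C(s) μ(ℝ^m)/ε for a dimensional constant C(s). -/

import Mathlib

open MeasureTheory Metric Filter Topology
open scoped ENNReal NNReal

noncomputable abbrev Euc (m : ℕ) := EuclideanSpace ℝ (Fin m)

/-- Upper density of a measure with respect to `r^s`. -/
noncomputable def upperDens {m : ℕ} (μ : Measure (Euc m)) (s : ℝ) (x : Euc m) : ℝ≥0∞ :=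
  limsup (fun r : ℝ => μ (ball x r) / ENNReal.ofReal (r ^ s)) (𝓝[>] 0)

/-- At a point of upper density `≥ ε`, there are arbitrarily small radii at which the ball
carries measure at least `(ε/2) r^s`. -/
lemma exists_small_ball {m : ℕ} (μ : Measure (Euc m)) (s : ℝ) {ε : ℝ} (hε : 0 < ε)
    {x : Euc m} (hx : ENNReal.ofReal ε ≤ upperDens μ s x) {δ : ℝ} (hδ : 0 < δ) :
    ∃ r : ℝ, 0 < r ∧ r ≤ δ ∧
      ENNReal.ofReal (ε / 2) * ENNReal.ofReal (r ^ s) ≤ μ (ball x r) := by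
  have hlt : ENNReal.ofReal (ε / 2) < upperDens μ s x :=
    lt_of_lt_of_le ((ENNReal.ofReal_lt_ofReal_iff hε).2 (by linarith)) hx
  have hfr : ∃ᶠ r in 𝓝[>] (0 : ℝ),
      ENNReal.ofReal (ε / 2) < μ (ball x r) / ENNReal.ofReal (r ^ s) :=
    frequently_lt_of_lt_limsup (by isBoundedDefault) hlt
  have hev : ∀ᶠ r in 𝓝[>] (0 : ℝ), r ∈ Set.Ioc (0 : ℝ) δ := Ioc_mem_nhdsGT hδ
  rcases (hfr.and_eventually hev).exists with ⟨r, hr1, hr2⟩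
  refine ⟨r, hr2.1, hr2.2, ?_⟩
  have h0 : ENNReal.ofReal (r ^ s) ≠ 0 := by
    simp only [ne_eq, ENNReal.ofReal_eq_zero, not_le]
    exact Real.rpow_pos_of_pos hr2.1 s
  exact le_of_lt ((ENNReal.lt_div_iff_mul_lt (Or.inl h0) (Or.inl ENNReal.ofReal_ne_top)).1 hr1)

/-- Federer–Ziemer covering estimate: for a finite Borel measure `μ` on `ℝ^m` and `s > 0`,
the set where the upper `s`-density is `≥ ε` has `H^s` measure at most `C(s) μ(ℝ^m)/ε`,
and the set of positive upper density has σ-finite `H^s` measure. -/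
theorem stmt4 (s : ℝ) (hs : 0 < s) :
    ∃ C : ℝ≥0∞, 0 < C ∧ C ≠ ⊤ ∧
      ∀ (m : ℕ) (μ : Measure (Euc m)) [IsFiniteMeasure μ],
        (∀ ε : ℝ, 0 < ε →
          μH[s] {x : Euc m | ENNReal.ofReal ε ≤ upperDens μ s x}
            ≤ C * μ Set.univ / ENNReal.ofReal ε) ∧
        SigmaFinite (μH[s].restrict {x : Euc m | 0 < upperDens μ s x}) := by
  have h8s : (0 : ℝ) < 8 ^ s := Real.rpow_pos_of_pos (by norm_num) s
  refine ⟨ENNReal.ofReal (2 * 8 ^ s), ENNReal.ofReal_pos.2 (by positivity),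
    ENNReal.ofReal_ne_top, ?_⟩
  intro m μ hμfin
  have main : ∀ ε : ℝ, 0 < ε →
      μH[s] {x : Euc m | ENNReal.ofReal ε ≤ upperDens μ s x}
        ≤ ENNReal.ofReal (2 * 8 ^ s) * μ Set.univ / ENNReal.ofReal ε := by
    intro ε hε
    set E := {x : Euc m | ENNReal.ofReal ε ≤ upperDens μ s x} with hE
    have hc0 : ENNReal.ofReal (ε / 2) ≠ 0 := by
      simp only [ne_eq, ENNReal.ofReal_eq_zero, not_le]; linarith
    have hcT : ENNReal.ofReal (ε / 2) ≠ ∞ := ENNReal.ofReal_ne_top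
    -- for each `δ>0`, a countable disjoint family of balls whose 4-enlargements cover `E`
    have cover : ∀ δ : ℝ, 0 < δ → ∃ (u : Set (Euc m)) (ρ : Euc m → ℝ),
        u.Countable ∧
        (∀ b ∈ u, 0 < ρ b ∧ ρ b ≤ δ ∧
          ENNReal.ofReal (ε / 2) * ENNReal.ofReal (ρ b ^ s) ≤ μ (ball b (ρ b))) ∧
        u.PairwiseDisjoint (fun b => ball b (ρ b)) ∧
        E ⊆ ⋃ b ∈ u, closedBall b (4 * ρ b) := by
      intro δ hδ
      have hx : ∀ x ∈ E, ∃ r : ℝ, 0 < r ∧ r ≤ δ ∧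
          ENNReal.ofReal (ε / 2) * ENNReal.ofReal (r ^ s) ≤ μ (ball x r) :=
        fun x hxE => exists_small_ball μ s hε hxE hδ
      choose! ρ h1 h2 h3 using hx
      obtain ⟨u, huE, hdisj, hcov⟩ :=
        Vitali.exists_disjoint_subfamily_covering_enlargement_closedBall E id ρ δ
          (fun a ha => h2 a ha) 4 (by norm_num)
      have hdisj' : u.PairwiseDisjoint (fun b => ball b (ρ b)) :=
        hdisj.mono_on fun b _ => ball_subset_closedBall
      have hcnt : u.Countable := by
        have hmeas : ∀ i : u, MeasurableSet (ball (i : Euc m) (ρ i)) :=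
          fun i => measurableSet_ball
        have hpd : Pairwise (Function.onFun Disjoint fun i : u => ball (i : Euc m) (ρ i)) := by
          intro i j hij
          exact hdisj' i.2 j.2 (fun h => hij (Subtype.ext h))
        have hcount := Measure.countable_meas_pos_of_disjoint_iUnion (μ := μ) hmeas hpd
        have huniv : {i : u | 0 < μ (ball (i : Euc m) (ρ i))} = Set.univ := by
          ext i
          simp only [Set.mem_setOf_eq, Set.mem_univ, iff_true]
          refine lt_of_lt_of_le (ENNReal.mul_pos hc0 ?_) (h3 i (huE i.2))
          simp only [ne_eq, ENNReal.ofReal_eq_zero, not_le]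
          exact Real.rpow_pos_of_pos (h1 i (huE i.2)) s
        have : Countable u := by
          rw [huniv, Set.countable_univ_iff] at hcount
          exact hcount
        exact Set.countable_coe_iff.1 this
      refine ⟨u, ρ, hcnt,
        fun b hb => ⟨h1 b (huE hb), h2 b (huE hb), h3 b (huE hb)⟩, hdisj', ?_⟩
      intro a ha
      obtain ⟨b, hbu, hsub⟩ := hcov a ha
      exact Set.mem_biUnion hbu (hsub (mem_closedBall_self (h1 a ha).le))
    choose u ρ hcnt hprop hdisj hcov using
      fun n : ℕ => cover (1 / (n + 1)) (by positivity)
    haveI : ∀ n : ℕ, Countable (u n) := fun n => (hcnt n).to_subtype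
    set K : ℝ≥0∞ := ENNReal.ofReal (8 ^ s) * (μ Set.univ / ENNReal.ofReal (ε / 2)) with hK
    have hsum : ∀ n : ℕ,
        (∑' i : u n, EMetric.diam (closedBall (i : Euc m) (4 * ρ n i)) ^ s) ≤ K := by
      intro n
      have hρpos : ∀ i : u n, 0 < ρ n i := fun i => (hprop n i i.2).1
      calc ∑' i : u n, EMetric.diam (closedBall (i : Euc m) (4 * ρ n i)) ^ s
          ≤ ∑' i : u n, ENNReal.ofReal ((8 * ρ n i) ^ s) := by
            refine ENNReal.tsum_le_tsum fun i => ?_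
            have hd : EMetric.diam (closedBall (i : Euc m) (4 * ρ n i))
                ≤ ENNReal.ofReal (8 * ρ n i) := by
              rw [← Metric.emetric_closedBall (by linarith [hρpos i] : (0:ℝ) ≤ 4 * ρ n i)]
              refine le_trans EMetric.diam_closedBall ?_
              rw [show ((2:ℝ≥0∞)) = ENNReal.ofReal 2 by simp,
                ← ENNReal.ofReal_mul (by norm_num)]
              exact ENNReal.ofReal_le_ofReal (by linarith)
            calc EMetric.diam (closedBall (i : Euc m) (4 * ρ n i)) ^ s
                ≤ ENNReal.ofReal (8 * ρ n i) ^ s := ENNReal.rpow_le_rpow hd hs.le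
              _ = ENNReal.ofReal ((8 * ρ n i) ^ s) :=
                  ENNReal.ofReal_rpow_of_pos (by linarith [hρpos i])
        _ = ∑' i : u n, ENNReal.ofReal (8 ^ s) * ENNReal.ofReal (ρ n i ^ s) := by
            refine tsum_congr fun i => ?_
            rw [Real.mul_rpow (by norm_num) (hρpos i).le,
              ENNReal.ofReal_mul (by positivity)]
        _ = ENNReal.ofReal (8 ^ s) * ∑' i : u n, ENNReal.ofReal (ρ n i ^ s) :=
            ENNReal.tsum_mul_left
        _ ≤ ENNReal.ofReal (8 ^ s) *
              ∑' i : u n, μ (ball (i : Euc m) (ρ n i)) / ENNReal.ofReal (ε / 2) := by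
            refine mul_le_mul' le_rfl (ENNReal.tsum_le_tsum fun i => ?_)
            rw [ENNReal.le_div_iff_mul_le (Or.inl hc0) (Or.inl hcT), mul_comm]
            exact (hprop n i i.2).2.2
        _ = ENNReal.ofReal (8 ^ s) *
              ((∑' i : u n, μ (ball (i : Euc m) (ρ n i))) / ENNReal.ofReal (ε / 2)) := by
            simp only [div_eq_mul_inv, ENNReal.tsum_mul_right]
        _ ≤ K := by
            rw [hK]
            refine mul_le_mul' le_rfl (ENNReal.div_le_div_right ?_ _)
            refine tsum_measure_le_measure_univ
              (fun i => measurableSet_ball.nullMeasurableSet) ?_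
            intro i j hij
            exact ((hdisj n) i.2 j.2 (fun h => hij (Subtype.ext h))).aedisjoint
    have hHle : μH[s] E ≤ K := by
      have hlim := Measure.hausdorffMeasure_le_liminf_tsum (ι := fun n : ℕ => u n) (l := atTop) s E
        (fun n : ℕ => ENNReal.ofReal (8 * (1 / (n + 1))))
        ?_ (fun n i => closedBall (i : Euc m) (4 * ρ n i)) ?_ ?_
      · refine hlim.trans ?_
        calc liminf (fun n : ℕ =>
              ∑' i : u n, EMetric.diam (closedBall (i : Euc m) (4 * ρ n i)) ^ s) atTop
            ≤ liminf (fun _ : ℕ => K) atTop :=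
              liminf_le_liminf (Eventually.of_forall hsum)
          _ = K := liminf_const K
      · have : Tendsto (fun n : ℕ => 8 * (1 / (n + 1 : ℝ))) atTop (𝓝 0) := by
          simpa using (tendsto_one_div_add_atTop_nhds_zero_nat (𝕜 := ℝ)).const_mul 8
        simpa using ENNReal.tendsto_ofReal this
      · refine Eventually.of_forall fun n => fun i => ?_
        have h1 := (hprop n i i.2).1
        have h2 := (hprop n i i.2).2.1
        show EMetric.diam (closedBall (i : Euc m) (4 * ρ n i))
          ≤ ENNReal.ofReal (8 * (1 / (n + 1)))
        rw [← Metric.emetric_closedBall (by linarith : (0:ℝ) ≤ 4 * ρ n i)]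
        refine le_trans EMetric.diam_closedBall ?_
        rw [show ((2:ℝ≥0∞)) = ENNReal.ofReal 2 by simp, ← ENNReal.ofReal_mul (by norm_num)]
        exact ENNReal.ofReal_le_ofReal (by linarith)
      · refine Eventually.of_forall fun n => ?_
        intro a ha
        obtain ⟨b, hbu, hmem⟩ := Set.mem_iUnion₂.1 (hcov n ha)
        exact Set.mem_iUnion.2 ⟨⟨b, hbu⟩, hmem⟩
    refine hHle.trans ?_
    have he0 : ENNReal.ofReal ε ≠ 0 := by
      simp only [ne_eq, ENNReal.ofReal_eq_zero, not_le]; exact hε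
    have heT : ENNReal.ofReal ε ≠ ∞ := ENNReal.ofReal_ne_top
    have hhalf : ENNReal.ofReal (ε / 2) = ENNReal.ofReal ε * 2⁻¹ := by
      rw [ENNReal.ofReal_div_of_pos (by norm_num), ENNReal.ofReal_ofNat, div_eq_mul_inv]
    have hinv : (ENNReal.ofReal (ε / 2))⁻¹ = 2 * (ENNReal.ofReal ε)⁻¹ := by
      rw [hhalf, ENNReal.mul_inv (Or.inl he0) (Or.inr (by simp)), inv_inv, mul_comm]
    have hED : μ Set.univ / ENNReal.ofReal (ε / 2) = 2 * μ Set.univ / ENNReal.ofReal ε := by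
      rw [div_eq_mul_inv (μ Set.univ), hinv, div_eq_mul_inv (2 * μ Set.univ)]
      ring
    rw [hK, hED, ENNReal.ofReal_mul (by norm_num : (0:ℝ) ≤ 2), ENNReal.ofReal_ofNat]
    apply le_of_eq
    rw [div_eq_mul_inv (2 * μ Set.univ), div_eq_mul_inv (2 * ENNReal.ofReal (8 ^ s) * μ Set.univ)]
    ring
  refine ⟨main, ?_⟩
  -- σ-finiteness
  set P := {x : Euc m | 0 < upperDens μ s x} with hP
  have hfin : ∀ n : ℕ,
      μH[s] {x : Euc m | ENNReal.ofReal (1 / (n + 1)) ≤ upperDens μ s x} < ⊤ := by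
    intro n
    refine lt_of_le_of_lt (main _ (by positivity)) ?_
    refine ENNReal.div_lt_top (ENNReal.mul_ne_top ENNReal.ofReal_ne_top (measure_ne_top μ _)) ?_
    simp only [ne_eq, ENNReal.ofReal_eq_zero, not_le]
    positivity
  choose M hM1 hM2 hM3 using fun n : ℕ =>
    exists_measurable_superset μH[s]
      {x : Euc m | ENNReal.ofReal (1 / (n + 1)) ≤ upperDens μ s x}
  have hPM : P ⊆ ⋃ n, M n := by
    intro x hx
    have hx' : 0 < upperDens μ s x := hx
    obtain ⟨n, hn⟩ : ∃ n : ℕ, ENNReal.ofReal (1 / (n + 1)) ≤ upperDens μ s x := by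
      rcases eq_or_ne (upperDens μ s x) ⊤ with h | h
      · exact ⟨0, by simp [h]⟩
      · obtain ⟨n, hn⟩ := exists_nat_one_div_lt (ENNReal.toReal_pos hx'.ne' h)
        refine ⟨n, ?_⟩
        have h2 : ENNReal.ofReal (1 / (n + 1 : ℝ))
            ≤ ENNReal.ofReal ((upperDens μ s x).toReal) :=
          ENNReal.ofReal_le_ofReal (by exact_mod_cast hn.le)
        rwa [ENNReal.ofReal_toReal h] at h2
    exact Set.mem_iUnion.2 ⟨n, hM1 n hn⟩
  have hMmeas : MeasurableSet (⋃ n, M n) := MeasurableSet.iUnion hM2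
  refine (Measure.FiniteSpanningSetsIn.sigmaFinite
    ⟨fun n => M n ∪ (⋃ k, M k)ᶜ, fun _ => Set.mem_univ _, ?_, ?_⟩)
  · intro n
    refine lt_of_le_of_lt (measure_union_le _ _) ?_
    have hA : (μH[s].restrict P) (M n) ≤ μH[s] (M n) := by
      rw [Measure.restrict_apply (hM2 n)]
      exact measure_mono Set.inter_subset_left
    have hB : (μH[s].restrict P) ((⋃ k, M k)ᶜ) = 0 := by
      rw [Measure.restrict_apply hMmeas.compl]
      have : (⋃ k, M k)ᶜ ∩ P = ∅ := by
        rw [Set.eq_empty_iff_forall_notMem]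
        rintro x ⟨hxc, hxP⟩
        exact hxc (hPM hxP)
      rw [this, measure_empty]
    calc (μH[s].restrict P) (M n) + (μH[s].restrict P) ((⋃ k, M k)ᶜ)
        ≤ μH[s] (M n) + 0 := add_le_add hA hB.le
      _ = μH[s] (M n) := by rw [add_zero]
      _ < ⊤ := by rw [hM3 n]; exact hfin n
  · rw [Set.eq_univ_iff_forall]
    intro x
    by_cases hx : x ∈ ⋃ k, M k
    · obtain ⟨k, hk⟩ := Set.mem_iUnion.1 hx
      exact Set.mem_iUnion.2 ⟨k, Or.inl hk⟩
    · exact Set.mem_iUnion.2 ⟨0, Or.inr hx⟩
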